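/- Let D be a 3-dicritical semi-complete digraph. Then every arc of D either belongs to a digon or is contained in an induced directed triangle of D. -/

import Mathlib

/-- A (loopless, simple) digraph on vertex type `V`. -/
structure SimpleDigraph (V : Type) where
  Adj : V → V → Prop
  loopless : ∀ v, ¬ Adj v v

namespace SimpleDigraph

/-- A set of arcs (given as a relation) is acyclic if it admits no directed closed walk. -/
def AcyclicRel {V : Type} (A : V → V → Prop) : Prop :=
  ∀ v, ¬ Relation.TransGen A v v

/-- A set of arcs is 2-dicolourable if the vertices can be coloured with two colours
so that each colour class induces an acyclic subdigraph. -/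
def Dicolourable2Rel {V : Type} (A : V → V → Prop) : Prop :=
  ∃ φ : V → Fin 2, ∀ i : Fin 2,
    AcyclicRel (fun a b => A a b ∧ φ a = i ∧ φ b = i)

/-- A digraph is 2-dicolourable if its vertices can be coloured with two colours
so that each colour class induces an acyclic subdigraph. -/
def Dicolourable2 {V : Type} (D : SimpleDigraph V) : Prop :=
  Dicolourable2Rel D.Adj

/-- `(S, A)` describes a subdigraph of `D`: its vertex set is `S` and its arcs
are given by `A`, which must join vertices of `S` and be arcs of `D`. -/
def IsSubdigraphOn {V : Type} (D : SimpleDigraph V) (S : Set V) (A : V → V → Prop) : Prop :=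
  ∀ u v, A u v → u ∈ S ∧ v ∈ S ∧ D.Adj u v

/-- `D` is 3-dicritical: `D` is not 2-dicolourable, but every proper subdigraph of `D`
(one missing a vertex or an arc) is 2-dicolourable. -/
def Dicritical3 {V : Type} (D : SimpleDigraph V) : Prop :=
  ¬ D.Dicolourable2 ∧
    ∀ (S : Set V) (A : V → V → Prop), D.IsSubdigraphOn S A →
      (S ≠ Set.univ ∨ A ≠ D.Adj) → Dicolourable2Rel A

/-- A digraph is semi-complete if any two distinct vertices are joined by at least one arc. -/
def SemiComplete {V : Type} (D : SimpleDigraph V) : Prop :=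
  ∀ u v : V, u ≠ v → D.Adj u v ∨ D.Adj v u

/-- A tournament is a semi-complete digraph with no digon. -/
def IsTournament {V : Type} (D : SimpleDigraph V) : Prop :=
  D.SemiComplete ∧ ∀ u v : V, ¬ (D.Adj u v ∧ D.Adj v u)

/-- Isomorphism of digraphs. -/
def Iso {V W : Type} (D : SimpleDigraph V) (E : SimpleDigraph W) : Prop :=
  ∃ e : V ≃ W, ∀ u v : V, D.Adj u v ↔ E.Adj (e u) (e v)

/-- `D` contains (a copy of) `H` as a subdigraph. -/
def ContainsSub {V W : Type} (D : SimpleDigraph V) (H : SimpleDigraph W) : Prop :=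
  ∃ f : W → V, Function.Injective f ∧ ∀ a b, H.Adj a b → D.Adj (f a) (f b)

/-- `D` contains (a copy of) `H` as an induced subdigraph. -/
def ContainsInduced {V W : Type} (D : SimpleDigraph V) (H : SimpleDigraph W) : Prop :=
  ∃ f : W → V, Function.Injective f ∧ ∀ a b, H.Adj a b ↔ D.Adj (f a) (f b)

end SimpleDigraph

/-! A 2-dicolouring of `D` minus the arc `ab` must put a monochromatic cycle through `ab`, hence
a monochromatic path from `b` back to `a`. Semi-completeness lets `b` shortcut any such path of
length at least three, so the path is `b → c → a`; acyclicity of the colour class then rules out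
the arcs `cb` and `ac`, which makes `abc` an induced directed triangle. -/

namespace Relation

variable {V : Type*} {R : V → V → Prop} {a b : V}

theorem TransGen.or_reflTransGen_through_of_or_arc {x y : V}
    (h : TransGen (fun u w => R u w ∨ u = a ∧ w = b) x y) :
    TransGen R x y ∨ ReflTransGen R x a ∧ ReflTransGen R b y := by
  induction h with
  | single h =>
    rcases h with h | ⟨rfl, rfl⟩
    · exact .inl (.single h)
    · exact .inr ⟨.refl, .refl⟩
  | tail _ hyz ih =>
    rcases hyz with hyz | ⟨rfl, rfl⟩
    · rcases ih with h | ⟨hxa, hby⟩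
      · exact .inl (h.tail hyz)
      · exact .inr ⟨hxa, hby.tail hyz⟩
    · rcases ih with h | ⟨hxa, -⟩
      · exact .inr ⟨h.to_reflTransGen, .refl⟩
      · exact .inr ⟨hxa, .refl⟩

theorem transGen_of_cycle_through_arc (hR : ∀ v, ¬ TransGen R v v) (hab : a ≠ b) {v : V}
    (h : TransGen (fun u w => R u w ∨ u = a ∧ w = b) v v) : TransGen R b a := by
  rcases h.or_reflTransGen_through_of_or_arc with h | ⟨hva, hbv⟩
  · exact absurd h (hR v)
  · exact (reflTransGen_iff_eq_or_transGen.mp (hbv.trans hva)).resolve_left hab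

theorem exists_shortcut_of_acyclic (hR : ∀ v, ¬ TransGen R v v)
    (hcomp : ∀ y, TransGen R b y → TransGen R y a → R b y ∨ R y b) (h : TransGen R b a) :
    R b a ∨ ∃ c, R b c ∧ R c a := by
  suffices key : ∀ x, TransGen R x a → R b x → ∃ c, R b c ∧ R c a by
    obtain ⟨x, hbx, hxa⟩ := TransGen.head'_iff.mp h
    rcases reflTransGen_iff_eq_or_transGen.mp hxa with rfl | hxa
    · exact .inl hbx
    · exact .inr (key x hxa hbx)
  intro x hxa
  induction hxa using TransGen.head_induction_on with
  | single hxa => exact fun hbx => ⟨_, hbx, hxa⟩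
  | @head x y hxy hya ih =>
    intro hbx
    have hby : TransGen R b y := .tail (.single hbx) hxy
    rcases hcomp y hby hya with hby | hyb
    · exact ih hby
    · exact absurd (hby.tail hyb) (hR b)

end Relation

namespace SimpleDigraph

open Relation

variable {V : Type}

theorem AcyclicRel.irrefl {R : V → V → Prop} (hR : AcyclicRel R) {x : V} : ¬ R x x :=
  fun h => hR x (.single h)

theorem AcyclicRel.asymm {R : V → V → Prop} (hR : AcyclicRel R) {x y : V} (h : R x y) :
    ¬ R y x :=
  fun h' => hR x (.tail (.single h) h')

def deleteArc (A : V → V → Prop) (a b : V) : V → V → Prop :=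
  fun u v => A u v ∧ ¬(u = a ∧ v = b)

def colourClass {ι : Type} (A : V → V → Prop) (φ : V → ι) (i : ι) : V → V → Prop :=
  fun u v => A u v ∧ φ u = i ∧ φ v = i

theorem Dicritical3.dicolourable2Rel_deleteArc {D : SimpleDigraph V} (hD : D.Dicritical3)
    {a b : V} (hab : D.Adj a b) : Dicolourable2Rel (deleteArc D.Adj a b) := by
  refine hD.2 Set.univ _ (fun u v h => ⟨trivial, trivial, h.1⟩) (.inr fun h => ?_)
  have : deleteArc D.Adj a b a b := by rw [h]; exact hab
  exact this.2 ⟨rfl, rfl⟩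

theorem exists_transGen_colourClass_deleteArc {A : V → V → Prop} (hA : ¬ Dicolourable2Rel A)
    {a b : V} (hab : a ≠ b) {φ : V → Fin 2}
    (hφ : ∀ i, AcyclicRel (colourClass (deleteArc A a b) φ i)) :
    ∃ i, TransGen (colourClass (deleteArc A a b) φ i) b a := by
  obtain ⟨i, v, hv⟩ : ∃ i v, TransGen (colourClass A φ i) v v := by
    by_contra! h
    exact hA ⟨φ, h⟩
  refine ⟨i, transGen_of_cycle_through_arc (hφ i) hab
    (TransGen.mono (fun u w ⟨huw, hu, hw⟩ => ?_) _ _ hv)⟩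
  by_cases hu_w : u = a ∧ w = b
  · exact .inr hu_w
  · exact .inl ⟨⟨huw, hu_w⟩, hu, hw⟩

theorem colourClass_left_of_transGen {ι : Type} {A : V → V → Prop} {φ : V → ι} {i : ι}
    {x y : V} (h : TransGen (colourClass A φ i) x y) : φ x = i := by
  obtain ⟨_, ⟨_, hx, _⟩, _⟩ := TransGen.head'_iff.mp h
  exact hx

theorem colourClass_right_of_transGen {ι : Type} {A : V → V → Prop} {φ : V → ι} {i : ι}
    {x y : V} (h : TransGen (colourClass A φ i) x y) : φ y = i := by
  obtain ⟨_, _, ⟨_, _, hy⟩⟩ := TransGen.tail'_iff.mp h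
  exact hy

theorem SemiComplete.colourClass_deleteArc_comparable {D : SimpleDigraph V}
    (hsc : D.SemiComplete) {ι : Type} {a b : V} {φ : V → ι} {i : ι}
    (hR : AcyclicRel (colourClass (deleteArc D.Adj a b) φ i)) {y : V}
    (hby : TransGen (colourClass (deleteArc D.Adj a b) φ i) b y)
    (hya : TransGen (colourClass (deleteArc D.Adj a b) φ i) y a) :
    colourClass (deleteArc D.Adj a b) φ i b y ∨ colourClass (deleteArc D.Adj a b) φ i y b := by
  have hyb : y ≠ b := by rintro rfl; exact hR y hby
  have hya' : y ≠ a := by rintro rfl; exact hR y hya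
  have hφb := colourClass_left_of_transGen hby
  have hφy := colourClass_right_of_transGen hby
  rcases hsc b y hyb.symm with h | h
  · exact .inl ⟨⟨h, fun h' => hyb h'.2⟩, hφb, hφy⟩
  · exact .inr ⟨⟨h, fun h' => hya' h'.1⟩, hφy, hφb⟩

theorem triangle_of_colourClass_deleteArc {ι : Type} {A : V → V → Prop} {a b c : V}
    {φ : V → ι} {i : ι} (hR : AcyclicRel (colourClass (deleteArc A a b) φ i))
    (hbc : colourClass (deleteArc A a b) φ i b c) (hca : colourClass (deleteArc A a b) φ i c a) :
    A b c ∧ A c a ∧ ¬ A c b ∧ ¬ A a c := by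
  have hca' : c ≠ a := by rintro rfl; exact hR.irrefl hca
  have hcb : c ≠ b := by rintro rfl; exact hR.irrefl hbc
  exact ⟨hbc.1.1, hca.1.1,
    fun h => hR.asymm hbc ⟨⟨h, fun h' => hca' h'.1⟩, hbc.2.2, hbc.2.1⟩,
    fun h => hR.asymm hca ⟨⟨h, fun h' => hcb h'.2⟩, hca.2.2, hca.2.1⟩⟩

end SimpleDigraph

theorem arc_mem_digon_or_induced_triangle_general
    {V : Type} (D : SimpleDigraph V) (hD : D.Dicritical3)
    (hsc : D.SemiComplete) :
    ∀ a b : V, D.Adj a b →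
      D.Adj b a ∨
      ∃ c : V, D.Adj b c ∧ D.Adj c a ∧ ¬ D.Adj b a ∧ ¬ D.Adj c b ∧ ¬ D.Adj a c := by
  intro a b hab
  by_cases hba : D.Adj b a
  · exact .inl hba
  obtain ⟨φ, hφ⟩ := hD.dicolourable2Rel_deleteArc hab
  obtain ⟨i, hpath⟩ :=
    SimpleDigraph.exists_transGen_colourClass_deleteArc hD.1
      (by rintro rfl; exact D.loopless a hab) hφ
  obtain ⟨c, hbc, hca⟩ := (Relation.exists_shortcut_of_acyclic (hφ i)
    (fun _ => hsc.colourClass_deleteArc_comparable (hφ i)) hpath).resolve_left fun h => hba h.1.1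
  obtain ⟨hbc', hca', hcb, hac⟩ :=
    SimpleDigraph.triangle_of_colourClass_deleteArc (hφ i) hbc hca
  exact .inr ⟨c, hbc', hca', hba, hcb, hac⟩

/-- In a 3-dicritical semi-complete digraph, every arc either belongs
to a digon or is contained in an induced directed triangle. -/
theorem arc_mem_digon_or_induced_triangle
    {V : Type} [Fintype V] (D : SimpleDigraph V) (hD : D.Dicritical3)
    (hsc : D.SemiComplete) :
    ∀ a b : V, D.Adj a b →
      D.Adj b a ∨
      ∃ c : V, D.Adj b c ∧ D.Adj c a ∧ ¬ D.Adj b a ∧ ¬ D.Adj c b ∧ ¬ D.Adj a c :=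
  arc_mem_digon_or_induced_triangle_general D hD hsc
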